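/- Let −1 < p ≤ 0 and β = 1/(8(p+1)(p+3)). For all x > 0, one has 1/(p+1) + 𝓘_p(x) + βx² < ((p+2)/(p+1) + βx²)·𝓘_{p+1}(x). -/

import Mathlib

/-!
Write `s = p + 1` and `t = x² / 4`, so that `𝓘_p(x) = ∑ tⁿ / ((s)ₙ n!)`, and expand both sides
of the inequality in powers of `t`. The coefficients of `1` and `t` agree exactly. For
`n = m + 2` the two recursions `(s)ₙ₊₁ = (s)ₙ (s + n) = s (s + 1)ₙ` show that the right-hand
coefficient exceeds the left-hand one by the factor `1 + m (m - s) / (2 (s + 2) (s + m + 2))`,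
which is at least `1` when `s ≤ 1` and strictly bigger at `m = 2`.
-/

open Real

noncomputable def besselJn (p x : ℝ) : ℝ :=
  ∑' n : ℕ, (-(1:ℝ)/4)^n * x^(2*n) / ((Real.Gamma (p+n+1) / Real.Gamma (p+1)) * n.factorial)

noncomputable def besselIn (p x : ℝ) : ℝ :=
  ∑' n : ℕ, ((1:ℝ)/4)^n * x^(2*n) / ((Real.Gamma (p+n+1) / Real.Gamma (p+1)) * n.factorial)

noncomputable def besselJ (p x : ℝ) : ℝ :=
  ∑' n : ℕ, (-1:ℝ)^n * (x/2)^(p+2*n) / (n.factorial * Real.Gamma (p+n+1))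

theorem Real.Gamma_add_nat_div_Gamma {s : ℝ} (hs : 0 < s) (n : ℕ) :
    Gamma (s + n) / Gamma s = (ascPochhammer ℝ n).eval s := by
  induction n with
  | zero => simp [(Gamma_pos_of_pos hs).ne']
  | succ n ih =>
    rw [ascPochhammer_succ_eval, ← ih, Nat.cast_succ, ← add_assoc,
      Gamma_add_one (by positivity)]
    ring

theorem min_le_ascPochhammer_eval {s : ℝ} (hs : 0 < s) (n : ℕ) :
    min s 1 ≤ (ascPochhammer ℝ n).eval s := by
  induction n with
  | zero => simp
  | succ n ih =>
    rw [ascPochhammer_succ_eval]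
    rcases n with _ | n
    · simp
    · have : 1 ≤ s + (n + 1 : ℕ) := by push_cast; linarith
      nlinarith [ascPochhammer_pos (n + 1) s hs]

namespace ModifiedBesselI

/- `term (p + 1) x n` is the `n`-th term of `𝓘_p(x)`: the order is shifted so that `(p + 1)_n`
is `ascPochhammer` evaluated at the first argument. -/
noncomputable def term (s x : ℝ) (n : ℕ) : ℝ :=
  (x ^ 2 / 4) ^ n / ((ascPochhammer ℝ n).eval s * n.factorial)

theorem besselIn_eq_tsum_term {p : ℝ} (hp : -1 < p) (x : ℝ) :
    besselIn p x = ∑' n, term (p + 1) x n := by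
  refine tsum_congr fun n => ?_
  rw [term, ← Real.Gamma_add_nat_div_Gamma (by linarith), add_right_comm, div_pow, one_pow,
    div_pow, ← pow_mul]
  ring

variable {s : ℝ} (x : ℝ)

theorem term_nonneg (hs : 0 < s) (n : ℕ) : 0 ≤ term s x n := by
  have := ascPochhammer_pos n s hs
  unfold term; positivity

theorem term_zero (s : ℝ) : term s x 0 = 1 := by
  simp [term]

theorem term_succ_mul (hs : 0 < s) (n : ℕ) :
    term s x (n + 1) * ((s + n) * (n + 1)) = x ^ 2 / 4 * term s x n := by
  have := (ascPochhammer_pos n s hs).ne'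
  have : s + n ≠ 0 := by positivity
  simp only [term, ascPochhammer_succ_eval, Nat.factorial_succ, Nat.cast_mul, pow_succ]
  field_simp
  push_cast
  ring

theorem term_add_one_mul (hs : 0 < s) (n : ℕ) :
    term (s + 1) x n * (s + n) = s * term s x n := by
  have := (ascPochhammer_pos n s hs).ne'
  have : s + n ≠ 0 := by positivity
  have hshift :
      (ascPochhammer ℝ n).eval (s + 1) = (ascPochhammer ℝ n).eval s * (s + n) / s := by
    rw [← ascPochhammer_succ_eval, ascPochhammer_succ_left]
    simp [hs.ne']
  rw [term, term, hshift]
  field_simp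

theorem sq_mul_term_add_one (hs : 0 < s) (n : ℕ) :
    x ^ 2 * term (s + 1) x n = 4 * s * (n + 1) * term s x (n + 1) := by
  have : s + n ≠ 0 := by positivity
  apply mul_right_cancel₀ this
  linear_combination x ^ 2 * term_add_one_mul x hs n - 4 * s * term_succ_mul x hs n

theorem summable_term (hs : 0 < s) : Summable (term s x) := by
  have hmin : 0 < min s 1 := lt_min hs one_pos
  refine Summable.of_nonneg_of_le (term_nonneg x hs) (fun n => ?_)
    ((Real.summable_pow_div_factorial (x ^ 2 / 4)).div_const (min s 1))
  have := min_le_ascPochhammer_eval hs n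
  have : (0 : ℝ) < n.factorial := by positivity
  rw [term, div_div, mul_comm (n.factorial : ℝ)]
  gcongr

variable {x}

theorem term_pos (hs : 0 < s) (hx : x ≠ 0) (n : ℕ) : 0 < term s x n := by
  have := ascPochhammer_pos n s hs
  unfold term; positivity

theorem tail_term_eq (hs : 0 < s) (m : ℕ) :
    (s + 1) / s * term (s + 1) x (m + 2) + 1 / (8 * s * (s + 2)) * x ^ 2 * term (s + 1) x (m + 1)
      = term s x (m + 2) + m * (m - s) / (2 * (s + 2) * (s + m + 2)) * term s x (m + 2) := by
  have hshift := term_add_one_mul x hs (m + 2)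
  have hsq := sq_mul_term_add_one x hs (m + 1)
  have : s + (m + 2 : ℕ) ≠ 0 := by positivity
  rw [mul_assoc, hsq, eq_div_of_mul_eq this hshift]
  push_cast
  field_simp
  ring

theorem term_le_tail (hs : 0 < s) (hs₁ : s ≤ 1) (m : ℕ) :
    term s x (m + 2) ≤ (s + 1) / s * term (s + 1) x (m + 2) +
      1 / (8 * s * (s + 2)) * x ^ 2 * term (s + 1) x (m + 1) := by
  rw [tail_term_eq hs]
  refine le_add_of_nonneg_right (mul_nonneg (div_nonneg ?_ (by positivity)) (term_nonneg x hs _))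
  rcases m with _ | m
  · simp
  · push_cast; nlinarith

theorem term_lt_tail_two (hs : 0 < s) (hs₂ : s < 2) (hx : x ≠ 0) :
    term s x 4 <
      (s + 1) / s * term (s + 1) x 4 + 1 / (8 * s * (s + 2)) * x ^ 2 * term (s + 1) x 3 := by
  rw [tail_term_eq hs 2, lt_add_iff_pos_right]
  have := term_pos hs hx 4
  have : (0 : ℝ) < 2 - s := by linarith
  norm_num
  positivity

theorem tsum_tail_lt (hs : 0 < s) (hs₁ : s ≤ 1) (hx : x ≠ 0) :
    ∑' m, term s x (m + 2) < (s + 1) / s * ∑' m, term (s + 1) x (m + 2) +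
      1 / (8 * s * (s + 2)) * x ^ 2 * ∑' m, term (s + 1) x (m + 1) := by
  have hb := summable_term x (show 0 < s + 1 by linarith)
  have hb₁ := (summable_nat_add_iff 1).mpr hb
  have hb₂ := (summable_nat_add_iff 2).mpr hb
  rw [← tsum_mul_left, ← tsum_mul_left, ← (hb₂.mul_left _).tsum_add (hb₁.mul_left _)]
  exact ((summable_nat_add_iff 2).mpr (summable_term x hs)).tsum_lt_tsum (term_le_tail hs hs₁)
    (term_lt_tail_two hs (by linarith) hx) ((hb₂.mul_left _).add (hb₁.mul_left _))

theorem tsum_term_lt (hs : 0 < s) (hs₁ : s ≤ 1) (hx : x ≠ 0) :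
    1 / s + ∑' n, term s x n + 1 / (8 * s * (s + 2)) * x ^ 2 <
      ((s + 1) / s + 1 / (8 * s * (s + 2)) * x ^ 2) * ∑' n, term (s + 1) x n := by
  set β := 1 / (8 * s * (s + 2))
  have ha := summable_term x hs
  have hb := summable_term x (show 0 < s + 1 by linarith)
  have hsplit (f : ℕ → ℝ) (hf : Summable f) :
      ∑' n, f n = f 0 + f 1 + ∑' m, f (m + 2) := by
    simpa [Finset.sum_range_succ] using (hf.sum_add_tsum_nat_add 2).symm
  have htail := tsum_tail_lt hs hs₁ hx
  have hhead : (s + 1) / s * term (s + 1) x 1 = term s x 1 := by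
    have := term_add_one_mul x hs 1
    push_cast at this
    field_simp
    linarith
  have hA := hsplit _ ha
  have hB := hsplit _ hb
  have hB' := hb.tsum_eq_zero_add
  rw [term_zero] at hA hB hB'
  have hcoef : (s + 1) / s = 1 + 1 / s := by field_simp
  rw [hcoef] at htail hhead ⊢
  have e₁ := congrArg ((1 + 1 / s) * ·) hB
  have e₂ := congrArg (β * x ^ 2 * ·) hB'
  rw [add_mul]
  linarith

end ModifiedBesselI

open ModifiedBesselI in
theorem modified_frame_upper (p : ℝ) (hp1 : -1 < p) (hp2 : p ≤ 0) (x : ℝ) (hx : 0 < x) :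
    1/(p+1) + besselIn p x + (1/(8*(p+1)*(p+3))) * x^2 <
      ((p+2)/(p+1) + (1/(8*(p+1)*(p+3))) * x^2) * besselIn (p+1) x := by
  rw [besselIn_eq_tsum_term hp1, besselIn_eq_tsum_term (by linarith : -1 < p + 1)]
  convert tsum_term_lt (s := p + 1) (by linarith) (by linarith) hx.ne' using 4 <;> ring
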